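/- If (G,σ) is a best match graph, then (G,σ) contains no induced F1-graph. -/

import Mathlib

/-- A rooted (phylogenetic) tree on leaf set `V`, encoded by its hierarchy of
clusters `L(T(v))`, `v ∈ V(T)`: a rooted tree on leaf set `V` corresponds
exactly to a family of nonempty, pairwise compatible subsets of `V` containing
all singletons and `V` itself.  Together with a coloring `σ : V → M` this is a
leaf-colored tree. -/
structure PhyloTree (V : Type) where
  clusters : Set (Set V)
  compat : ∀ p ∈ clusters, ∀ q ∈ clusters, p ⊆ q ∨ q ⊆ p ∨ p ∩ q = ∅
  singleton_mem : ∀ v : V, {v} ∈ clusters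
  univ_mem : Set.univ ∈ clusters
  nonempty_mem : ∀ p ∈ clusters, p.Nonempty

namespace PhyloTree

variable {V M : Type}

/-- The cluster `L(T(lca(x,y)))` of the last common ancestor of `x` and `y`;
for inner vertices `u,v` of a tree one has `u ⪯_T v ↔ L(T(u)) ⊆ L(T(v))`. -/
def lcaSet (T : PhyloTree V) (x y : V) : Set V :=
  ⋂₀ {p : Set V | p ∈ T.clusters ∧ x ∈ p ∧ y ∈ p}

/-- `T` displays the triple `xy|z`, i.e. `lca(x,y) ≺ lca(x,z) = lca(y,z)`. -/
def Displays (T : PhyloTree V) (x y z : V) : Prop :=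
  T.lcaSet x y ⊂ T.lcaSet x z ∧ T.lcaSet x z = T.lcaSet y z

/-- `y` is a best match of `x` in the leaf-colored tree `(T,σ)`. -/
def BestMatch (T : PhyloTree V) (σ : V → M) (x y : V) : Prop :=
  σ x ≠ σ y ∧ ∀ y' : V, σ y' = σ y → T.lcaSet x y ⊆ T.lcaSet x y'

end PhyloTree

variable {V M : Type}

/-- `(T,σ)` explains `(G,σ)`, i.e. `(G,σ) = G(T,σ)`. -/
def Explains (T : PhyloTree V) (σ : V → M) (G : V → V → Prop) : Prop :=
  ∀ x y : V, G x y ↔ T.BestMatch σ x y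

/-- `(G,σ)` is a best match graph. -/
def IsBMG (G : V → V → Prop) (σ : V → M) : Prop :=
  ∃ T : PhyloTree V, Explains T σ G

/-- The triple `xy|y'` is informative for `(G,σ)`. -/
def InformativeTriple (G : V → V → Prop) (σ : V → M) (x y y' : V) : Prop :=
  x ≠ y ∧ x ≠ y' ∧ y ≠ y' ∧ σ x ≠ σ y ∧ σ y = σ y' ∧ G x y ∧ ¬ G x y'

/-- The triple `xy|y'` is forbidden for `(G,σ)`. -/
def ForbiddenTriple (G : V → V → Prop) (σ : V → M) (x y y' : V) : Prop :=
  x ≠ y ∧ x ≠ y' ∧ y ≠ y' ∧ σ x ≠ σ y ∧ σ y = σ y' ∧ G x y ∧ G x y'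

/-- `(G,σ)` is sf-colored: `σ` is proper and every vertex has an out-neighbor
of every color present in the graph other than its own. -/
def SfColored (G : V → V → Prop) (σ : V → M) : Prop :=
  (∀ x y : V, G x y → σ x ≠ σ y) ∧
  ∀ (x : V) (s : M), (∃ v : V, σ v = s) → s ≠ σ x → ∃ y : V, σ y = s ∧ G x y

/-- `(G,σ)` contains an induced F1-graph. -/
def HasF1 (G : V → V → Prop) (σ : V → M) : Prop :=
  ∃ x1 x2 y1 y2 : V,
    x1 ≠ x2 ∧ y1 ≠ y2 ∧
    σ x1 = σ x2 ∧ σ y1 = σ y2 ∧ σ x1 ≠ σ y1 ∧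
    ¬ G x1 x2 ∧ ¬ G x2 x1 ∧ ¬ G y1 y2 ∧ ¬ G y2 y1 ∧
    G x1 y1 ∧ G y2 x2 ∧ G y1 x2 ∧ ¬ G x1 y2 ∧ ¬ G y2 x1

/-- `(G,σ)` contains an induced F2-graph. -/
def HasF2 (G : V → V → Prop) (σ : V → M) : Prop :=
  ∃ x1 x2 y1 y2 : V,
    x1 ≠ x2 ∧ y1 ≠ y2 ∧
    σ x1 = σ x2 ∧ σ y1 = σ y2 ∧ σ x1 ≠ σ y1 ∧
    ¬ G x1 x2 ∧ ¬ G x2 x1 ∧ ¬ G y1 y2 ∧ ¬ G y2 y1 ∧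
    G x1 y1 ∧ G y1 x2 ∧ G x2 y2 ∧ ¬ G x1 y2

/-- `(G,σ)` contains an induced F3-graph. -/
def HasF3 (G : V → V → Prop) (σ : V → M) : Prop :=
  ∃ x1 x2 y1 y2 y3 : V,
    x1 ≠ x2 ∧ y1 ≠ y2 ∧ y1 ≠ y3 ∧ y2 ≠ y3 ∧
    σ x1 = σ x2 ∧ σ y1 = σ y2 ∧ σ y2 = σ y3 ∧ σ x1 ≠ σ y1 ∧
    ¬ G x1 x2 ∧ ¬ G x2 x1 ∧ ¬ G y1 y2 ∧ ¬ G y2 y1 ∧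
    ¬ G y1 y3 ∧ ¬ G y3 y1 ∧ ¬ G y2 y3 ∧ ¬ G y3 y2 ∧
    G x1 y1 ∧ G x2 y2 ∧ G x1 y3 ∧ G x2 y3 ∧ ¬ G x1 y2 ∧ ¬ G x2 y1


/-!
If `y` is a best match of `x`, then so is every leaf of `y`'s color below `lca(x,y)`: its
lca with `x` is at most `lca(x,y)`. In an F1-graph, `x2` lies below `lca(x1,y1)` (because
`y1` prefers `x2` to `x1`) and below `lca(y2,x2)`. These two clusters therefore meet and are
nested; if the first lies below the second, `x1` becomes a best match of `y2`, and otherwise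
`y2` becomes a best match of `x1`, contradicting a non-arc of the F1-graph either way.
-/

namespace PhyloTree

variable (T : PhyloTree V)

theorem mem_lcaSet_left (x y : V) : x ∈ T.lcaSet x y :=
  Set.mem_sInter.2 fun _ hp => hp.2.1

theorem mem_lcaSet_right (x y : V) : y ∈ T.lcaSet x y :=
  Set.mem_sInter.2 fun _ hp => hp.2.2

theorem lcaSet_comm (x y : V) : T.lcaSet x y = T.lcaSet y x := by
  simp only [lcaSet, @and_comm (x ∈ _)]

variable {T}

theorem lcaSet_subset {x y : V} {p : Set V} (hp : p ∈ T.clusters) (hx : x ∈ p) (hy : y ∈ p) :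
    T.lcaSet x y ⊆ p :=
  Set.sInter_subset_of_mem ⟨hp, hx, hy⟩

theorem subset_or_subset_of_mem_of_mem {p q : Set V} (hp : p ∈ T.clusters) (hq : q ∈ T.clusters)
    {v : V} (hvp : v ∈ p) (hvq : v ∈ q) : p ⊆ q ∨ q ⊆ p := by
  rcases T.compat p hp q hq with hpq | hqp | hdisj
  · exact .inl hpq
  · exact .inr hqp
  · exact absurd (hdisj ▸ Set.mem_inter hvp hvq) (Set.notMem_empty v)

theorem lcaSet_mem_clusters [Finite V] (x y : V) : T.lcaSet x y ∈ T.clusters := by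
  obtain ⟨m, hm, hmin⟩ := (Set.toFinite {p | p ∈ T.clusters ∧ x ∈ p ∧ y ∈ p}).exists_minimal
    ⟨Set.univ, T.univ_mem, trivial, trivial⟩
  have hm_least : ∀ p ∈ {p | p ∈ T.clusters ∧ x ∈ p ∧ y ∈ p}, m ⊆ p := fun p hp =>
    (subset_or_subset_of_mem_of_mem hm.1 hp.1 hm.2.1 hp.2.1).elim id (hmin hp)
  have hlca : T.lcaSet x y = m :=
    subset_antisymm (Set.sInter_subset_of_mem hm) (Set.subset_sInter hm_least)
  exact hlca ▸ hm.1

variable {σ : V → M}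

theorem BestMatch.of_mem_lcaSet [Finite V] {x y y' : V} (h : T.BestMatch σ x y)
    (hy' : y' ∈ T.lcaSet x y) (hσ : σ y' = σ y) : T.BestMatch σ x y' :=
  ⟨hσ ▸ h.1, fun z hz =>
    (lcaSet_subset (T.lcaSet_mem_clusters x y) (T.mem_lcaSet_left x y) hy').trans
      (h.2 z (hz.trans hσ))⟩

theorem BestMatch.mem_lcaSet {x y x' : V} (h : T.BestMatch σ y x) (hσ : σ x' = σ x) :
    x ∈ T.lcaSet x' y :=
  T.lcaSet_comm y x' ▸ h.2 x' hσ (T.mem_lcaSet_right y x)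

end PhyloTree

open PhyloTree

/-- A BMG contains no induced F1-graph. -/
theorem bmg_no_F1 [Fintype V] (G : V → V → Prop) (σ : V → M)
    (h : IsBMG G σ) : ¬ HasF1 G σ := by
  rintro ⟨x1, x2, y1, y2, -, -, hx, hy, -, -, -, -, -, hx1y1, hy2x2, hy1x2, hx1y2, hy2x1⟩
  obtain ⟨T, hT⟩ := h
  have hx2_mem : x2 ∈ T.lcaSet x1 y1 := ((hT y1 x2).1 hy1x2).mem_lcaSet hx
  rcases subset_or_subset_of_mem_of_mem (T.lcaSet_mem_clusters x1 y1)
      (T.lcaSet_mem_clusters y2 x2) hx2_mem (T.mem_lcaSet_right y2 x2) with hsub | hsub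
  · exact hy2x1 <| (hT y2 x1).2 <|
      ((hT y2 x2).1 hy2x2).of_mem_lcaSet (hsub (T.mem_lcaSet_left x1 y1)) hx
  · exact hx1y2 <| (hT x1 y2).2 <|
      ((hT x1 y1).1 hx1y1).of_mem_lcaSet (hsub (T.mem_lcaSet_left y2 x2)) hy.symm
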